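/- Let v₁,…,vₙ ∈ ℝ^d, let t, f be integers with 0 ≤ f ≤ t, 3t ≤ n, and n−2t ≥ 1, and let C ⊆ {1,…,n} with |C| = n−f. Suppose x ∈ ℝ^d satisfies, for every coordinate k ∈ {1,…,d}, min{ c_k : c ∈ S₂ } ≤ x_k ≤ max{ c_k : c ∈ S₂ }. Then dist( x , (1/(n−f))·∑_{i∈C} v_i ) ≤ 2√d · diam(S_Cent). -/

import Mathlib

/-- The set of possible centroids: centroids of all `(n-t)`-element subsets of the `n` input
vectors. -/
def SCent (n d t : ℕ) (v : Fin n → EuclideanSpace ℝ (Fin d)) :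
    Set (EuclideanSpace ℝ (Fin d)) :=
  {x | ∃ I : Finset (Fin n), I.card = n - t ∧ x = (1 / ((n - t : ℕ) : ℝ)) • ∑ i ∈ I, v i}

/-- `S₂`: the set of centroids of all `(n-2t)`-element subsets of the `n` input vectors. -/
def S₂ (n d t : ℕ) (v : Fin n → EuclideanSpace ℝ (Fin d)) :
    Set (EuclideanSpace ℝ (Fin d)) :=
  {x | ∃ I : Finset (Fin n), I.card = n - 2 * t ∧
    x = (1 / ((n - 2 * t : ℕ) : ℝ)) • ∑ i ∈ I, v i}

/-- Among the `r`-element subsets of `F`, one (the "top `r`") has average at least the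
average of `F`. -/
private lemma exists_subset_mul_sum_le' {ι : Type*} [DecidableEq ι] (F : Finset ι) (w : ι → ℝ)
    (r : ℕ) (hr : r ≤ F.card) :
    ∃ T ⊆ F, T.card = r ∧ (r : ℝ) * ∑ i ∈ F, w i ≤ (F.card : ℝ) * ∑ i ∈ T, w i := by
  rcases Nat.eq_zero_or_pos r with hr0 | hrpos
  · exact ⟨∅, Finset.empty_subset F, by simp [hr0]⟩
  obtain ⟨T, hTP, hmax⟩ := (F.powersetCard r).exists_max_image (fun S => ∑ i ∈ S, w i)
    (Finset.powersetCard_nonempty.mpr hr)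
  obtain ⟨hTF, hTcard⟩ := Finset.mem_powersetCard.mp hTP
  have hTne : T.Nonempty := Finset.card_pos.mp (by omega)
  have hxy : ∀ y ∈ F \ T, ∀ x ∈ T, w y ≤ w x := by
    intro y hy x hx
    have hyF : y ∈ F := (Finset.mem_sdiff.mp hy).1
    have hyT : y ∉ T := (Finset.mem_sdiff.mp hy).2
    have hyT' : y ∉ T.erase x := fun h => hyT (Finset.erase_subset _ _ h)
    have hmem : insert y (T.erase x) ∈ F.powersetCard r := by
      rw [Finset.mem_powersetCard]
      refine ⟨Finset.insert_subset hyF ((Finset.erase_subset _ _).trans hTF), ?_⟩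
      rw [Finset.card_insert_of_notMem hyT', Finset.card_erase_of_mem hx, hTcard]
      omega
    have hle := hmax _ hmem
    rw [Finset.sum_insert hyT', Finset.sum_erase_eq_sub hx] at hle
    linarith
  obtain ⟨x₀, hx₀, hmin⟩ := T.exists_min_image w hTne
  have h1 : ∑ i ∈ F \ T, w i ≤ ((F \ T).card : ℝ) * w x₀ := by
    have := Finset.sum_le_card_nsmul (F \ T) w (w x₀) (fun y hy => hxy y hy x₀ hx₀)
    simpa [nsmul_eq_mul] using this
  have h2 : (r : ℝ) * w x₀ ≤ ∑ i ∈ T, w i := by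
    have := Finset.card_nsmul_le_sum T w (w x₀) (fun y hy => hmin y hy)
    simpa [nsmul_eq_mul, hTcard] using this
  refine ⟨T, hTF, hTcard, ?_⟩
  have hFsplit : ∑ i ∈ F \ T, w i + ∑ i ∈ T, w i = ∑ i ∈ F, w i := Finset.sum_sdiff hTF
  have e1 : (r : ℝ) * ∑ i ∈ F, w i
      = (r : ℝ) * ∑ i ∈ F \ T, w i + (r : ℝ) * ∑ i ∈ T, w i := by rw [← hFsplit]; ring
  have e2 : (F.card : ℝ) * ∑ i ∈ T, w i
      = ((F \ T).card : ℝ) * ∑ i ∈ T, w i + (r : ℝ) * ∑ i ∈ T, w i := by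
    have : ((F \ T).card : ℝ) = (F.card : ℝ) - r := by
      rw [Finset.card_sdiff_of_subset hTF, hTcard, Nat.cast_sub hr]
    rw [this]; ring
  have hq : (0:ℝ) ≤ ((F \ T).card : ℝ) := Nat.cast_nonneg _
  have hr' : (0:ℝ) ≤ (r : ℝ) := Nat.cast_nonneg _
  nlinarith [mul_le_mul_of_nonneg_left h1 hr', mul_le_mul_of_nonneg_left h2 hq]

/-- Among the `r`-element subsets of `F`, one has average at most the average of `F`. -/
private lemma exists_subset_mul_sum_ge' {ι : Type*} [DecidableEq ι] (F : Finset ι) (w : ι → ℝ)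
    (r : ℕ) (hr : r ≤ F.card) :
    ∃ T ⊆ F, T.card = r ∧ (F.card : ℝ) * ∑ i ∈ T, w i ≤ (r : ℝ) * ∑ i ∈ F, w i := by
  obtain ⟨T, hTF, hTc, h⟩ := exists_subset_mul_sum_le' F (fun i => -(w i)) r hr
  refine ⟨T, hTF, hTc, ?_⟩
  simp only [Finset.sum_neg_distrib, mul_neg] at h
  linarith

/-- A single coordinate difference is bounded by the Euclidean distance. -/
private lemma coord_dist_le' {d : ℕ} (x y : EuclideanSpace ℝ (Fin d)) (k : Fin d) :
    |x k - y k| ≤ dist x y := by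
  rw [EuclideanSpace.dist_eq, ← Real.sqrt_sq_eq_abs]
  apply Real.sqrt_le_sqrt
  have : (x k - y k) ^ 2 = dist (x k) (y k) ^ 2 := by rw [Real.dist_eq, sq_abs]
  rw [this]
  exact Finset.single_le_sum (f := fun i => dist (x i) (y i) ^ 2)
    (fun i _ => sq_nonneg _) (Finset.mem_univ k)

private lemma SCent_finite (n d t : ℕ) (v : Fin n → EuclideanSpace ℝ (Fin d)) :
    (SCent n d t v).Finite := by
  apply Set.Finite.subset (Set.finite_range
    (fun I : Finset (Fin n) => (1 / ((n - t : ℕ) : ℝ)) • ∑ i ∈ I, v i))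
  rintro x ⟨I, -, rfl⟩
  exact ⟨I, rfl⟩

/-- Core one-sided, one-coordinate bound: every point of `S₂` is, in each coordinate, at most
the true centroid plus twice the diameter of `SCent`. -/
private lemma S2_coord_le (n d t f : ℕ) (hf : f ≤ t) (h3t : 3 * t ≤ n)
    (hn2t : 1 ≤ n - 2 * t) (v : Fin n → EuclideanSpace ℝ (Fin d))
    (C : Finset (Fin n)) (hC : C.card = n - f) (k : Fin d)
    (c : EuclideanSpace ℝ (Fin d)) (hc : c ∈ S₂ n d t v) :
    c k ≤ ((1 / ((n - f : ℕ) : ℝ)) • ∑ i ∈ C, v i) k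
      + 2 * Metric.diam (SCent n d t v) := by
  obtain ⟨I, hIcard, rfl⟩ := hc
  set w : Fin n → ℝ := fun i => v i k with hw
  have hexpand : ∀ (r : ℝ) (S : Finset (Fin n)),
      ((r • ∑ i ∈ S, v i : EuclideanSpace ℝ (Fin d))) k = r * ∑ i ∈ S, w i := by
    intro r S
    have : (∑ i ∈ S, v i) k = ∑ i ∈ S, v i k := by
      rw [WithLp.ofLp_sum]; exact Finset.sum_apply k S (fun i => v i)
    simp [this, hw]
  obtain ⟨T, hTI, hTcard, hT⟩ := exists_subset_mul_sum_le' I w t (by omega)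
  rw [hIcard] at hT
  have hcompl : (Finset.univ \ I).card = 2 * t := by
    rw [Finset.card_sdiff_of_subset (Finset.subset_univ I), Finset.card_univ, Fintype.card_fin, hIcard]
    omega
  obtain ⟨A, hAsub, hAcard⟩ :=
    Finset.exists_subset_card_eq (show t ≤ (Finset.univ \ I).card by omega)
  obtain ⟨J, hJC, hJcard, hJ⟩ := exists_subset_mul_sum_ge' C w (n - t) (by omega)
  rw [hC] at hJ
  have hdisj : Disjoint I A := by
    rw [Finset.disjoint_right]
    intro a ha
    exact (Finset.mem_sdiff.mp (hAsub ha)).2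
  have hP1 : (1 / ((n - t : ℕ) : ℝ)) • ∑ i ∈ Finset.univ \ A, v i ∈ SCent n d t v := by
    refine ⟨_, ?_, rfl⟩
    rw [Finset.card_sdiff_of_subset (Finset.subset_univ A), Finset.card_univ, Fintype.card_fin, hAcard]
  have hP2 : (1 / ((n - t : ℕ) : ℝ)) • ∑ i ∈ Finset.univ \ T, v i ∈ SCent n d t v := by
    refine ⟨_, ?_, rfl⟩
    rw [Finset.card_sdiff_of_subset (Finset.subset_univ T), Finset.card_univ, Fintype.card_fin, hTcard]
  have hQ : (1 / ((n - t : ℕ) : ℝ)) • ∑ i ∈ I ∪ A, v i ∈ SCent n d t v := by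
    refine ⟨_, ?_, rfl⟩
    rw [Finset.card_union_of_disjoint hdisj, hIcard, hAcard]
    omega
  have hPJ : (1 / ((n - t : ℕ) : ℝ)) • ∑ i ∈ J, v i ∈ SCent n d t v := ⟨J, hJcard, rfl⟩
  set D := Metric.diam (SCent n d t v) with hD
  have hbd := (SCent_finite n d t v).isBounded
  have hd1 : (1 / ((n - t : ℕ) : ℝ)) * ∑ i ∈ Finset.univ \ A, w i
      - (1 / ((n - t : ℕ) : ℝ)) * ∑ i ∈ Finset.univ \ T, w i ≤ D := by
    have h := le_trans (le_abs_self _)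
      (le_trans (coord_dist_le' _ _ k) (Metric.dist_le_diam_of_mem hbd hP1 hP2))
    rwa [hexpand, hexpand] at h
  have hd2 : (1 / ((n - t : ℕ) : ℝ)) * ∑ i ∈ I ∪ A, w i
      - (1 / ((n - t : ℕ) : ℝ)) * ∑ i ∈ J, w i ≤ D := by
    have h := le_trans (le_abs_self _)
      (le_trans (coord_dist_le' _ _ k) (Metric.dist_le_diam_of_mem hbd hQ hPJ))
    rwa [hexpand, hexpand] at h
  have hsA : ∑ i ∈ Finset.univ \ A, w i = ∑ i ∈ Finset.univ, w i - ∑ i ∈ A, w i := by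
    rw [eq_sub_iff_add_eq, Finset.sum_sdiff (Finset.subset_univ A)]
  have hsT : ∑ i ∈ Finset.univ \ T, w i = ∑ i ∈ Finset.univ, w i - ∑ i ∈ T, w i := by
    rw [eq_sub_iff_add_eq, Finset.sum_sdiff (Finset.subset_univ T)]
  have hsU : ∑ i ∈ I ∪ A, w i = ∑ i ∈ I, w i + ∑ i ∈ A, w i := Finset.sum_union hdisj
  rw [hsA, hsT] at hd1
  rw [hsU] at hd2
  have hmt : ((n - t : ℕ) : ℝ) = ((n - 2 * t : ℕ) : ℝ) + (t : ℝ) := by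
    have : (n - t : ℕ) = (n - 2 * t) + t := by omega
    rw [this]; push_cast; ring
  have hm0 : (0 : ℝ) < ((n - 2 * t : ℕ) : ℝ) := by
    have : (1 : ℝ) ≤ ((n - 2 * t : ℕ) : ℝ) := by exact_mod_cast hn2t
    linarith
  have hs0 : (0 : ℝ) < ((n - t : ℕ) : ℝ) := by
    have : (0 : ℝ) ≤ (t : ℝ) := Nat.cast_nonneg t
    linarith [hmt]
  have hc0 : (0 : ℝ) < ((n - f : ℕ) : ℝ) := by
    have h1 : (n - t : ℕ) ≤ (n - f : ℕ) := by omega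
    have : ((n - t : ℕ) : ℝ) ≤ ((n - f : ℕ) : ℝ) := by exact_mod_cast h1
    linarith
  have key : (1 / ((n - 2 * t : ℕ) : ℝ)) * ∑ i ∈ I, w i
      = (1 / ((n - t : ℕ) : ℝ)) * (∑ i ∈ I, w i + ∑ i ∈ A, w i)
      + ((1 / ((n - t : ℕ) : ℝ)) * ∑ i ∈ T, w i - (1 / ((n - t : ℕ) : ℝ)) * ∑ i ∈ A, w i)
      + (1 / (((n - 2 * t : ℕ) : ℝ) * ((n - t : ℕ) : ℝ)))
        * ((t : ℝ) * ∑ i ∈ I, w i - ((n - 2 * t : ℕ) : ℝ) * ∑ i ∈ T, w i) := by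
    rw [hmt]
    field_simp
    ring
  have hneg : (1 / (((n - 2 * t : ℕ) : ℝ) * ((n - t : ℕ) : ℝ)))
      * ((t : ℝ) * ∑ i ∈ I, w i - ((n - 2 * t : ℕ) : ℝ) * ∑ i ∈ T, w i) ≤ 0 := by
    apply mul_nonpos_of_nonneg_of_nonpos
    · positivity
    · linarith
  have hJle : (1 / ((n - t : ℕ) : ℝ)) * ∑ i ∈ J, w i
      ≤ (1 / ((n - f : ℕ) : ℝ)) * ∑ i ∈ C, w i := by
    rw [div_mul_eq_mul_div, div_mul_eq_mul_div, div_le_div_iff₀ hs0 hc0]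
    nlinarith [hJ]
  rw [hexpand, hexpand]
  linarith [key, hneg, hd1, hd2, hJle]

/-- The mirrored lower bound, obtained from `S2_coord_le` by negating all vectors. -/
private lemma S2_coord_ge (n d t f : ℕ) (hf : f ≤ t) (h3t : 3 * t ≤ n)
    (hn2t : 1 ≤ n - 2 * t) (v : Fin n → EuclideanSpace ℝ (Fin d))
    (C : Finset (Fin n)) (hC : C.card = n - f) (k : Fin d)
    (c : EuclideanSpace ℝ (Fin d)) (hc : c ∈ S₂ n d t v) :
    ((1 / ((n - f : ℕ) : ℝ)) • ∑ i ∈ C, v i) k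
      - 2 * Metric.diam (SCent n d t v) ≤ c k := by
  have hc' : -c ∈ S₂ n d t (fun i => -v i) := by
    obtain ⟨I, hI, rfl⟩ := hc
    exact ⟨I, hI, by simp [Finset.sum_neg_distrib, smul_neg]⟩
  have hset : SCent n d t (fun i => -v i) = Neg.neg '' SCent n d t v := by
    ext y
    constructor
    · rintro ⟨I, hI, rfl⟩
      exact ⟨(1 / ((n - t : ℕ) : ℝ)) • ∑ i ∈ I, v i, ⟨I, hI, rfl⟩,
        by simp [Finset.sum_neg_distrib, smul_neg]⟩
    · rintro ⟨z, ⟨I, hI, rfl⟩, rfl⟩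
      exact ⟨I, hI, by simp [Finset.sum_neg_distrib, smul_neg]⟩
  have h := S2_coord_le n d t f hf h3t hn2t (fun i => -v i) C hC k (-c) hc'
  rw [hset, Isometry.diam_image isometry_neg] at h
  have h1 : ((1 / ((n - f : ℕ) : ℝ)) • ∑ i ∈ C, -v i : EuclideanSpace ℝ (Fin d)) k
      = -(((1 / ((n - f : ℕ) : ℝ)) • ∑ i ∈ C, v i : EuclideanSpace ℝ (Fin d)) k) := by
    rw [Finset.sum_neg_distrib, smul_neg]
    rfl
  have h2 : (-c : EuclideanSpace ℝ (Fin d)) k = -(c k) := rfl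
  rw [h1, h2] at h
  linarith

/-- Any point of the coordinate-parallel bounding box of `S₂` (the relaxed centroid box) is at
distance at most `2√d · diam S_Cent` from the true centroid (the centroid of the `n - f`
correct vectors). -/
theorem dist_relaxedCentroidBox_trueCentroid_le (n d t f : ℕ) (hf : f ≤ t)
    (h3t : 3 * t ≤ n) (hn2t : 1 ≤ n - 2 * t)
    (v : Fin n → EuclideanSpace ℝ (Fin d)) (C : Finset (Fin n)) (hC : C.card = n - f)
    (x : EuclideanSpace ℝ (Fin d))
    (hx : ∀ k : Fin d,
      sInf ((fun c => c k) '' S₂ n d t v) ≤ x k ∧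
      x k ≤ sSup ((fun c => c k) '' S₂ n d t v)) :
    dist x ((1 / ((n - f : ℕ) : ℝ)) • ∑ i ∈ C, v i)
      ≤ 2 * Real.sqrt d * Metric.diam (SCent n d t v) := by
  set D := Metric.diam (SCent n d t v) with hD
  have hDnn : 0 ≤ D := Metric.diam_nonneg
  obtain ⟨I₀, hI₀sub, hI₀card⟩ := Finset.exists_subset_card_eq
    (show n - 2 * t ≤ (Finset.univ : Finset (Fin n)).card by
      rw [Finset.card_univ, Fintype.card_fin]; omega)
  have hc₀ : (1 / ((n - 2 * t : ℕ) : ℝ)) • ∑ i ∈ I₀, v i ∈ S₂ n d t v := ⟨I₀, hI₀card, rfl⟩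
  set y : EuclideanSpace ℝ (Fin d) := (1 / ((n - f : ℕ) : ℝ)) • ∑ i ∈ C, v i with hy
  have habs : ∀ k : Fin d, |x k - y k| ≤ 2 * D := by
    intro k
    have hne : ((fun c => c k) '' S₂ n d t v).Nonempty :=
      ⟨_, _, hc₀, rfl⟩
    have hub : x k ≤ y k + 2 * D := by
      refine le_trans (hx k).2 (csSup_le hne ?_)
      rintro b ⟨c, hc, rfl⟩
      exact S2_coord_le n d t f hf h3t hn2t v C hC k c hc
    have hlb : y k - 2 * D ≤ x k := by
      refine le_trans (le_csInf hne ?_) (hx k).1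
      rintro b ⟨c, hc, rfl⟩
      exact S2_coord_ge n d t f hf h3t hn2t v C hC k c hc
    rw [abs_le]
    constructor <;> linarith
  rw [EuclideanSpace.dist_eq]
  have hsum : ∑ k : Fin d, dist (x k) (y k) ^ 2 ≤ (d : ℝ) * (2 * D) ^ 2 := by
    calc ∑ k : Fin d, dist (x k) (y k) ^ 2 ≤ ∑ _k : Fin d, (2 * D) ^ 2 := by
          refine Finset.sum_le_sum fun k _ => ?_
          rw [Real.dist_eq]
          exact pow_le_pow_left₀ (abs_nonneg _) (habs k) 2
      _ = (d : ℝ) * (2 * D) ^ 2 := by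
          rw [Finset.sum_const, Finset.card_univ, Fintype.card_fin, nsmul_eq_mul]
  calc Real.sqrt (∑ k : Fin d, dist (x k) (y k) ^ 2)
      ≤ Real.sqrt ((d : ℝ) * (2 * D) ^ 2) := Real.sqrt_le_sqrt hsum
    _ = 2 * Real.sqrt d * D := by
        rw [Real.sqrt_mul (Nat.cast_nonneg d), Real.sqrt_sq (by linarith)]
        ring
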